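/- Let (X,T) be a transitive, expansive dynamical system on a compact metric space with a locally constant number of pre-images, and let {B_j} be a sequence of θ-Hölder functions converging in the θ-Hölder norm to a potential A. Then for each index j one can choose a sub-action v_j for the potential B_j in such a way that the sequence {v_j} is equicontinuous and uniformly bounded, and every uniform accumulation point of {v_j} is a sub-action for A. -/

import Mathlib

/-!
The sub-actions are the classical ones, `v_B x = sup {S_n (B - β_B) y : T^[n] y = x}`, for which
`B - β_B + v_B ≤ v_B ∘ T` holds by construction. Expansiveness together with the lifting of
nearby points gives exponential backward shadowing: a pre-orbit of `x` is shadowed by a pre-orbit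
of any `x'` with `d(x, x') < ξ`, so for `θ`-Hölder `B` the Birkhoff sums along the two differ by at
most `K (1 - κ^{-θ})⁻¹ d(x, x')^θ`, and `v_B` is locally `θ`-Hölder with a constant depending only
on the Hölder constant `K` of `B`. Transitivity adds a closing lemma: lifting along a
pseudo-orbit that returns to its starting point is a contraction of a small ball, whose fixed
point is periodic. So every orbit segment is shadowed by a periodic orbit with bounded extra time;
periodic orbit averages are at most `β_B`, which bounds `v_B` in terms of `K` and `‖B‖₀`. Hölder
convergence of `B_j` to `A` makes all these constants uniform in `j`, and
`β_{B_j} ≤ β_A + ‖B_j - A‖₀` lets the sub-action inequality pass to the limit.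
-/

open MeasureTheory Filter Topology Metric Set

variable {X : Type*} [MetricSpace X] [CompactSpace X] [MeasurableSpace X] [BorelSpace X]

/-- The set of `T`-invariant Borel probability measures on `X`. -/
def MT (T : X → X) : Set (ProbabilityMeasure X) :=
  {μ | (μ : Measure X).map T = (μ : Measure X)}

/-- The integral of the potential `B` against a measure. -/
noncomputable def intA (B : X → ℝ) (μ : ProbabilityMeasure X) : ℝ :=
  ∫ x, B x ∂(μ : Measure X)

/-- The maximal ergodic average `β_B = max {∫B dμ : μ ∈ M_T}`. -/
noncomputable def betaConst (T : X → X) (B : X → ℝ) : ℝ :=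
  sSup (intA B '' MT T)

/-- `v` is a sub-action for the potential `B`: `B + v - v∘T ≤ β_B` pointwise. -/
def IsSubAction (T : X → X) (B v : X → ℝ) : Prop :=
  ∀ x : X, B x + v x - v (T x) ≤ betaConst T B

/-- Topological transitivity. -/
def TopTransitive (T : X → X) : Prop :=
  ∀ U V : Set X, IsOpen U → IsOpen V → U.Nonempty → V.Nonempty →
    ∃ k : ℕ, (U ∩ T^[k] ⁻¹' V).Nonempty

open Function
open scoped ENNReal

section Shadowing

variable {α : Type*} [PseudoMetricSpace α]

-- The paper's *expansiveness* and *locally constant number of pre-images*.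
def LocallyExpanding (T : α → α) (ζ κ : ℝ) : Prop :=
  ∀ x y, dist x y < ζ → κ * dist x y ≤ dist (T x) (T y)

def LiftsPreimages (T : α → α) (ξ ζ : ℝ) : Prop :=
  ∀ x' y' x, dist x' y' < ξ → T x = x' → ∃ y, T y = y' ∧ dist x y < ζ

def PeriodicShadowing (T : α → α) (κ η₀ : ℝ) (m₀ : ℕ) : Prop :=
  ∀ n ≥ 1, ∀ y, ∃ m ≤ m₀, ∃ p, IsPeriodicPt T (m + n) p ∧
    ∀ i < n, dist (T^[i] p) (T^[i] y) ≤ κ⁻¹ ^ (n - i) * η₀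

variable {T : α → α} {ζ κ ξ : ℝ}

theorem LocallyExpanding.pow_mul_dist_le (hexp : LocallyExpanding T ζ κ) (hκ : 0 ≤ κ)
    {a b : α} {N : ℕ} (h : ∀ i < N, dist (T^[i] a) (T^[i] b) < ζ) :
    κ ^ N * dist a b ≤ dist (T^[N] a) (T^[N] b) := by
  induction N with
  | zero => simp
  | succ N ih =>
    calc κ ^ (N + 1) * dist a b = κ * (κ ^ N * dist a b) := by ring
      _ ≤ κ * dist (T^[N] a) (T^[N] b) := by gcongr; exact ih fun i hi => h i (by omega)
      _ ≤ dist (T^[N + 1] a) (T^[N + 1] b) := by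
        simpa only [iterate_succ_apply'] using hexp _ _ (h N N.lt_succ_self)

theorem LocallyExpanding.dist_le_inv_mul_dist_iterate (hexp : LocallyExpanding T ζ κ)
    (hκ : 1 ≤ κ) {a b : α} {N : ℕ} (hN : 1 ≤ N) (h : ∀ i < N, dist (T^[i] a) (T^[i] b) < ζ) :
    dist a b ≤ κ⁻¹ * dist (T^[N] a) (T^[N] b) := by
  have hκ₀ : 0 < κ := by linarith
  rw [inv_mul_eq_div, le_div_iff₀' hκ₀]
  calc κ * dist a b ≤ κ ^ N * dist a b := by gcongr; exact le_self_pow₀ hκ (by omega)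
    _ ≤ dist (T^[N] a) (T^[N] b) := hexp.pow_mul_dist_le hκ₀.le h

theorem exists_backward_shadowing (hexp : LocallyExpanding T ζ κ) (hpre : LiftsPreimages T ξ ζ)
    (hκ : 1 ≤ κ) {η : ℝ} (hη : η < ξ) (n : ℕ) {y w : α} (hw : dist (T^[n] y) w ≤ η) :
    ∃ z, T^[n] z = w ∧ ∀ i ≤ n, dist (T^[i] z) (T^[i] y) ≤ κ⁻¹ ^ (n - i) * η := by
  induction n generalizing y with
  | zero => exact ⟨w, rfl, fun i hi => by simpa [Nat.le_zero.mp hi, dist_comm] using hw⟩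
  | succ n ih =>
    obtain ⟨z₁, hz₁, hclose⟩ := ih (y := T y) (by rwa [← iterate_succ_apply])
    have hκ₀ : 0 < κ := by linarith
    have hη₀ : 0 ≤ η := dist_nonneg.trans hw
    have hz₁y : dist (T y) z₁ ≤ κ⁻¹ ^ n * η := by
      simpa [dist_comm] using hclose 0 n.zero_le
    have hlt : dist (T y) z₁ < ξ :=
      (hz₁y.trans (mul_le_of_le_one_left hη₀ (pow_le_one₀ (by positivity)
        (inv_le_one_of_one_le₀ hκ)))).trans_lt hη
    obtain ⟨z, rfl, hz⟩ := hpre (T y) z₁ y hlt rfl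
    refine ⟨z, by rwa [iterate_succ_apply], fun i hi => ?_⟩
    rcases i with _ | i
    · have hexp_yz : κ * dist y z ≤ κ⁻¹ ^ n * η := (hexp y z hz).trans hz₁y
      rw [iterate_zero_apply, iterate_zero_apply, dist_comm, Nat.sub_zero, pow_succ,
        mul_comm _ κ⁻¹, mul_assoc, ← div_eq_inv_mul, le_div_iff₀' hκ₀]
      exact hexp_yz
    · simpa only [iterate_succ_apply, Nat.succ_sub_succ] using hclose i (by omega)

theorem exists_iterate_eq_dist_le (hexp : LocallyExpanding T ζ κ) (hpre : LiftsPreimages T ξ ζ)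
    (hκ : 1 ≤ κ) {n : ℕ} {y w : α} (h : dist (T^[n] y) w < ξ) :
    ∃ z, T^[n] z = w ∧ dist z y ≤ κ⁻¹ ^ n * dist (T^[n] y) w := by
  obtain ⟨z, hz, hclose⟩ := exists_backward_shadowing hexp hpre hκ h n le_rfl
  exact ⟨z, hz, by simpa using hclose 0 n.zero_le⟩

theorem exists_lift_of_return (hexp : LocallyExpanding T ζ κ) (hpre : LiftsPreimages T ξ ζ)
    (hκ : 1 ≤ κ) {ρ η : ℝ} (hη : η < ξ) {m n : ℕ} {y w z : α} (hw : T^[m] w = y)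
    (hgap : dist (T^[n] y) w + ρ ≤ η) (hz : dist z y ≤ ρ) :
    ∃ z', T^[m + n] z' = z ∧ (∀ i ≤ n, dist (T^[i] z') (T^[i] y) ≤ κ⁻¹ ^ (n - i) * η) ∧
      ∀ i ≤ m, dist (T^[i + n] z') (T^[i] w) ≤ ρ := by
  have hρ : 0 ≤ ρ := dist_nonneg.trans hz
  have hpow : ∀ k, κ⁻¹ ^ k * ρ ≤ ρ := fun k =>
    mul_le_of_le_one_left hρ (pow_le_one₀ (by positivity) (inv_le_one_of_one_le₀ hκ))
  obtain ⟨w', hw', hw'w⟩ := exists_backward_shadowing hexp hpre hκ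
    ((le_add_of_nonneg_left dist_nonneg).trans_lt (hgap.trans_lt hη)) m
    (y := w) (w := z) (by rwa [hw, dist_comm])
  have hgap' : dist (T^[n] y) w' ≤ η := by
    calc dist (T^[n] y) w' ≤ dist (T^[n] y) w + dist w w' := dist_triangle _ _ _
      _ ≤ dist (T^[n] y) w + ρ := by
        gcongr; simpa [dist_comm] using (hw'w 0 m.zero_le).trans (hpow _)
      _ ≤ η := hgap
  obtain ⟨z', hz', hz'y⟩ := exists_backward_shadowing hexp hpre hκ hη n hgap'
  refine ⟨z', by rw [iterate_add_apply, hz', hw'], hz'y, fun i hi => ?_⟩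
  rw [iterate_add_apply, hz']
  exact (hw'w i hi).trans (hpow _)

theorem exists_iterate_eq_dist_lt_of_near (hexp : LocallyExpanding T ζ κ)
    (hpre : LiftsPreimages T ξ ζ) (hκ : 1 < κ) {p₀ k : ℕ} {r₀ : ℝ} (hp₀ : ξ < κ ^ p₀ * r₀)
    {a z x' : α} (hza : dist z (T^[p₀] a) < ξ / 2) (hzx' : dist (T^[k] z) x' < ξ / 2) :
    ∃ w, T^[k + p₀] w = x' ∧ dist w a < r₀ := by
  have hκinv : ∀ j, κ⁻¹ ^ j ≤ 1 := fun j =>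
    pow_le_one₀ (by positivity) (inv_le_one_of_one_le₀ hκ.le)
  obtain ⟨u, hu, hud⟩ := exists_iterate_eq_dist_le hexp hpre hκ.le
    (hzx'.trans (half_lt_self (by linarith [dist_nonneg (x := z) (y := T^[p₀] a)])))
  have hau : dist (T^[p₀] a) u < ξ := by
    calc dist (T^[p₀] a) u ≤ dist z (T^[p₀] a) + dist z u := dist_triangle_left _ _ _
      _ < ξ / 2 + ξ / 2 := by
        rw [dist_comm z u]
        exact add_lt_add hza
          (hud.trans_lt ((mul_le_of_le_one_left dist_nonneg (hκinv _)).trans_lt hzx'))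
      _ = ξ := add_halves ξ
  obtain ⟨w, hw, hwd⟩ := exists_iterate_eq_dist_le hexp hpre hκ.le hau
  refine ⟨w, by rw [iterate_add_apply, hw, hu], ?_⟩
  calc dist w a ≤ κ⁻¹ ^ p₀ * dist (T^[p₀] a) u := hwd
    _ < κ⁻¹ ^ p₀ * (κ ^ p₀ * r₀) := by gcongr; exact hau.trans hp₀
    _ = r₀ := by rw [← mul_assoc, ← mul_pow, inv_mul_cancel₀ (by positivity), one_pow, one_mul]

end Shadowing

section Closing

variable {α : Type*} [MetricSpace α]

theorem IsComplete.exists_rel_self_of_contracting {s : Set α} (hs : IsComplete s)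
    (hne : s.Nonempty) {q : ℝ} (hq₀ : 0 ≤ q) (hq : q < 1) {R : α → α → Prop}
    (hR : ∀ z ∈ s, ∃ z' ∈ s, R z z')
    (hcontr : ∀ z z' a b, R z a → R z' b → dist a b ≤ q * dist z z') :
    ∃ p ∈ s, R p p := by
  choose F hFs hFR using hR
  let f : s → s := fun z => ⟨F z z.2, hFs z z.2⟩
  have : CompleteSpace s := hs.completeSpace_coe
  have : Nonempty s := hne.to_subtype
  have hf : ContractingWith ⟨q, hq₀⟩ f :=
    ⟨hq, LipschitzWith.of_dist_le_mul fun z z' => hcontr _ _ _ _ (hFR z z.2) (hFR z' z'.2)⟩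
  obtain ⟨p, hp⟩ : ∃ p, f p = p := ⟨_, hf.fixedPoint_isFixedPt⟩
  refine ⟨p, p.2, ?_⟩
  have hFp : F p p.2 = p := congrArg Subtype.val hp
  simpa [hFp] using hFR p p.2

variable {T : α → α} {ζ κ ξ : ℝ}

theorem exists_periodic_of_return [CompleteSpace α] (hexp : LocallyExpanding T ζ κ)
    (hpre : LiftsPreimages T ξ ζ) (hκ : 1 < κ) {η : ℝ} (hη : 0 < η) (hηξ : η < ξ)
    (hηζ : η + η < ζ) {m n : ℕ} (hn : 1 ≤ n) {y w : α} (hw : T^[m] w = y)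
    (hgap : dist (T^[n] y) w + κ⁻¹ * η ≤ η) :
    ∃ p, IsPeriodicPt T (m + n) p ∧ ∀ i < n, dist (T^[i] p) (T^[i] y) ≤ κ⁻¹ ^ (n - i) * η := by
  set ρ := κ⁻¹ * η
  have hρη : ρ ≤ η := mul_le_of_le_one_left hη.le (inv_le_one_of_one_le₀ hκ.le)
  have hpow : ∀ k, κ⁻¹ ^ k * η ≤ η := fun k =>
    mul_le_of_le_one_left hη.le (pow_le_one₀ (by positivity) (inv_le_one_of_one_le₀ hκ.le))
  -- `z'` lifts `z` along the pseudo-orbit `y, …, T^[n-1] y, w, …, T^[m-1] w`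
  let R : α → α → Prop := fun z z' => T^[m + n] z' = z ∧
    (∀ i ≤ n, dist (T^[i] z') (T^[i] y) ≤ κ⁻¹ ^ (n - i) * η) ∧
    ∀ i ≤ m, dist (T^[i + n] z') (T^[i] w) ≤ ρ
  have hlift : ∀ z ∈ closedBall y ρ, ∃ z' ∈ closedBall y ρ, R z z' := by
    intro z hz
    obtain ⟨z', hz'⟩ := exists_lift_of_return hexp hpre hκ.le hηξ hw hgap (mem_closedBall.mp hz)
    refine ⟨z', mem_closedBall.mpr ?_, hz'⟩
    calc dist z' y ≤ κ⁻¹ ^ n * η := by simpa using hz'.2.1 0 n.zero_le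
      _ ≤ κ⁻¹ ^ 1 * η := mul_le_mul_of_nonneg_right
        (pow_le_pow_of_le_one (by positivity) (inv_le_one_of_one_le₀ hκ.le) hn) hη.le
      _ = ρ := by rw [pow_one]
  have hcontr : ∀ z z' a b, R z a → R z' b → dist a b ≤ κ⁻¹ * dist z z' := by
    rintro z z' a b ⟨rfl, ha, ha'⟩ ⟨rfl, hb, hb'⟩
    refine hexp.dist_le_inv_mul_dist_iterate hκ.le (by omega) fun i hi => ?_
    rcases le_or_gt i n with hin | hin
    · calc dist (T^[i] a) (T^[i] b) ≤ dist (T^[i] a) (T^[i] y) + dist (T^[i] b) (T^[i] y) :=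
            dist_triangle_right _ _ _
        _ ≤ η + η := add_le_add ((ha i hin).trans (hpow _)) ((hb i hin).trans (hpow _))
        _ < ζ := hηζ
    · obtain ⟨j, rfl⟩ : ∃ j, i = j + n := ⟨i - n, by omega⟩
      calc dist (T^[j + n] a) (T^[j + n] b)
          ≤ dist (T^[j + n] a) (T^[j] w) + dist (T^[j + n] b) (T^[j] w) :=
            dist_triangle_right _ _ _
        _ ≤ η + η := add_le_add ((ha' j (by omega)).trans hρη) ((hb' j (by omega)).trans hρη)
        _ < ζ := hηζ
  obtain ⟨p, -, hp, hpy, -⟩ := isClosed_closedBall.isComplete.exists_rel_self_of_contracting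
    ⟨y, mem_closedBall_self (by positivity)⟩ (by positivity) (inv_lt_one_of_one_lt₀ hκ)
    hlift hcontr
  exact ⟨p, hp, fun i hi => hpy i hi.le⟩

variable [CompactSpace α]

theorem TopTransitive.exists_iterate_eq_dist_lt (htrans : TopTransitive T)
    (hexp : LocallyExpanding T ζ κ) (hpre : LiftsPreimages T ξ ζ) (hκ : 1 < κ) (hξ : 0 < ξ)
    {r : ℝ} (hr : 0 < r) :
    ∃ m₀ : ℕ, ∀ x x' : α, ∃ m ≤ m₀, ∃ w, T^[m] w = x' ∧ dist w x < r := by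
  set r₀ := min (r / 2) (ξ / 4)
  have hr₀ : 0 < r₀ := by positivity
  obtain ⟨p₀, hp₀⟩ := pow_unbounded_of_one_lt (ξ / r₀) hκ
  obtain ⟨t, -, ht, hcover⟩ := isCompact_univ.finite_cover_balls (X := α) hr₀
  have hlink : ∀ a b : α, ∃ k : ℕ, (ball (T^[p₀] a) (ξ / 2) ∩ T^[k] ⁻¹' ball b r₀).Nonempty :=
    fun a b => htrans _ _ isOpen_ball isOpen_ball ⟨_, mem_ball_self (by positivity)⟩
      ⟨_, mem_ball_self hr₀⟩
  choose k z hz using hlink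
  obtain ⟨K, hK⟩ := ((ht.prod ht).image fun ab : α × α => k ab.1 ab.2).bddAbove
  refine ⟨K + p₀, fun x x' => ?_⟩
  obtain ⟨a, ha, hxa⟩ := mem_iUnion₂.mp (hcover (mem_univ x))
  obtain ⟨b, hb, hx'b⟩ := mem_iUnion₂.mp (hcover (mem_univ x'))
  obtain ⟨hza, hzb⟩ := hz a b
  have hzx' : dist (T^[k a b] (z a b)) x' < ξ / 2 := by
    calc dist (T^[k a b] (z a b)) x' ≤ dist (T^[k a b] (z a b)) b + dist x' b :=
          dist_triangle_right _ _ _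
      _ < r₀ + r₀ := add_lt_add hzb hx'b
      _ ≤ ξ / 2 := by linarith [min_le_right (r / 2) (ξ / 4)]
  obtain ⟨w, hw, hwa⟩ := exists_iterate_eq_dist_lt_of_near hexp hpre hκ
    ((div_lt_iff₀ hr₀).mp hp₀) hza hzx'
  refine ⟨k a b + p₀, by gcongr; exact hK ⟨(a, b), ⟨ha, hb⟩, rfl⟩, w, hw, ?_⟩
  calc dist w x ≤ dist w a + dist x a := dist_triangle_right _ _ _
    _ < r₀ + r₀ := add_lt_add hwa hxa
    _ ≤ r := by linarith [min_le_left (r / 2) (ξ / 4)]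

theorem exists_periodicShadowing (hζ : 0 < ζ) (hκ : 1 < κ) (hξ : 0 < ξ)
    (htrans : TopTransitive T) (hexp : LocallyExpanding T ζ κ) (hpre : LiftsPreimages T ξ ζ) :
    ∃ η₀ > 0, ∃ m₀, PeriodicShadowing T κ η₀ m₀ := by
  set η₀ := min ξ ζ / 4 with hη₀_def
  have hη₀ : 0 < η₀ := by positivity
  have hρη₀ : κ⁻¹ * η₀ < η₀ := mul_lt_of_lt_one_left hη₀ (inv_lt_one_of_one_lt₀ hκ)
  obtain ⟨m₀, hm₀⟩ := htrans.exists_iterate_eq_dist_lt hexp hpre hκ hξ (sub_pos.mpr hρη₀)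
  refine ⟨η₀, hη₀, m₀, fun n hn y => ?_⟩
  obtain ⟨m, hm, w, hw, hwy⟩ := hm₀ (T^[n] y) y
  obtain ⟨p, hp, hpy⟩ := exists_periodic_of_return hexp hpre hκ hη₀
    (by rw [hη₀_def]; linarith [min_le_left ξ ζ]) (by rw [hη₀_def]; linarith [min_le_right ξ ζ])
    hn hw (by rw [dist_comm]; linarith)
  exact ⟨m, hm, p, hp, hpy⟩

end Closing

section BirkhoffSums

open Finset

theorem sum_range_pow_sub_le {q : ℝ} (hq₀ : 0 ≤ q) (hq : q < 1) (n : ℕ) :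
    ∑ i ∈ range n, q ^ (n - i) ≤ (1 - q)⁻¹ := by
  rw [← sum_range_reflect]
  calc ∑ j ∈ range n, q ^ (n - (n - 1 - j)) ≤ ∑ j ∈ range n, q ^ j :=
        sum_le_sum fun j hj => pow_le_pow_of_le_one hq₀ hq.le (by simp at hj; omega)
    _ ≤ q ^ 0 / (1 - q) := by rw [range_eq_Ico]; exact geom_sum_Ico_le_of_lt_one hq₀ hq
    _ = (1 - q)⁻¹ := by rw [pow_zero, one_div]

variable {α : Type*}

theorem birkhoffSum_comp_apply {M : Type*} [AddCommMonoid M] (f : α → α) (g : α → M)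
    (n : ℕ) (x : α) : birkhoffSum f (g ∘ f) n x = birkhoffSum f g n (f x) := by
  simp only [birkhoffSum, comp_apply, ← (Commute.iterate_self f _).eq]

theorem Function.IsPeriodicPt.birkhoffSum_apply_eq {M : Type*} [AddCommMonoid M]
    {f : α → α} {n : ℕ} {x : α} (hx : IsPeriodicPt f n x) (g : α → M) :
    birkhoffSum f g n (f x) = birkhoffSum f g n x := by
  rcases n with _ | n
  · simp
  rw [birkhoffSum_succ, ← iterate_succ_apply, hx.eq, birkhoffSum_succ', add_comm]

variable {T : α → α} {g : α → ℝ}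

theorem neg_mul_le_birkhoffSum {b : ℝ} (hgb : ∀ x, -b ≤ g x) (n : ℕ) (x : α) :
    -(n * b) ≤ birkhoffSum T g n x := by
  simpa [birkhoffSum] using card_nsmul_le_sum (range n) _ (-b) fun i _ => hgb (T^[i] x)

variable [PseudoMetricSpace α] {κ K θ : ℝ}

theorem birkhoffSum_le_add_of_shadowing (hκ : 1 < κ) (hθ : 0 < θ) (hK : 0 ≤ K)
    (hg : ∀ x y, |g x - g y| ≤ K * dist x y ^ θ) {d : ℝ} (hd : 0 ≤ d) {n : ℕ} {y z : α}
    (hzy : ∀ i < n, dist (T^[i] z) (T^[i] y) ≤ κ⁻¹ ^ (n - i) * d) :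
    birkhoffSum T g n y ≤ birkhoffSum T g n z + K * (1 - κ⁻¹ ^ θ)⁻¹ * d ^ θ := by
  have hκ₀ : 0 ≤ κ⁻¹ := by positivity
  set q := κ⁻¹ ^ θ
  have hq₀ : 0 ≤ q := Real.rpow_nonneg hκ₀ θ
  have hq : q < 1 := Real.rpow_lt_one hκ₀ (inv_lt_one_of_one_lt₀ hκ) hθ
  have hterm : ∀ i ∈ range n, g (T^[i] y) ≤ g (T^[i] z) + K * d ^ θ * q ^ (n - i) := by
    intro i hi
    have hdist : dist (T^[i] y) (T^[i] z) ^ θ ≤ q ^ (n - i) * d ^ θ := by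
      calc dist (T^[i] y) (T^[i] z) ^ θ ≤ (κ⁻¹ ^ (n - i) * d) ^ θ := by
            rw [dist_comm]
            exact Real.rpow_le_rpow dist_nonneg (hzy i (mem_range.mp hi)) hθ.le
        _ = q ^ (n - i) * d ^ θ := by
          rw [Real.mul_rpow (by positivity) hd, ← Real.rpow_natCast, ← Real.rpow_natCast,
            ← Real.rpow_mul hκ₀, ← Real.rpow_mul hκ₀, mul_comm θ, mul_comm]
    have := (abs_le.mp (hg (T^[i] y) (T^[i] z))).2
    nlinarith
  calc birkhoffSum T g n y ≤ ∑ i ∈ range n, (g (T^[i] z) + K * d ^ θ * q ^ (n - i)) :=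
        sum_le_sum hterm
    _ = birkhoffSum T g n z + K * d ^ θ * ∑ i ∈ range n, q ^ (n - i) := by
        rw [sum_add_distrib, ← mul_sum]; rfl
    _ ≤ birkhoffSum T g n z + K * d ^ θ * (1 - q)⁻¹ := by
        gcongr
        exact sum_range_pow_sub_le hq₀ hq n
    _ = birkhoffSum T g n z + K * (1 - q)⁻¹ * d ^ θ := by ring

theorem PeriodicShadowing.birkhoffSum_le {η₀ b : ℝ} {m₀ : ℕ}
    (hsh : PeriodicShadowing T κ η₀ m₀) (hκ : 1 < κ) (hθ : 0 < θ) (hK : 0 ≤ K)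
    (hg : ∀ x y, |g x - g y| ≤ K * dist x y ^ θ) (hη₀ : 0 ≤ η₀)
    (hper : ∀ N p, IsPeriodicPt T N p → birkhoffSum T g N p ≤ 0)
    (hb : 0 ≤ b) (hgb : ∀ x, -b ≤ g x) (n : ℕ) (y : α) :
    birkhoffSum T g n y ≤ K * (1 - κ⁻¹ ^ θ)⁻¹ * η₀ ^ θ + m₀ * b := by
  have hσ : 0 ≤ (1 - κ⁻¹ ^ θ)⁻¹ :=
    inv_nonneg.mpr (sub_nonneg.mpr (Real.rpow_le_one (by positivity)
      (inv_le_one_of_one_le₀ hκ.le) hθ.le))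
  rcases Nat.eq_zero_or_pos n with rfl | hn
  · simp only [birkhoffSum_zero]
    have := Real.rpow_nonneg hη₀ θ
    positivity
  obtain ⟨m, hm, p, hp, hpy⟩ := hsh n hn y
  have hshadow := birkhoffSum_le_add_of_shadowing hκ hθ hK hg hη₀ hpy
  have hsplit := birkhoffSum_add T g n m p
  rw [add_comm n m] at hsplit
  have htail := neg_mul_le_birkhoffSum (T := T) hgb m (T^[n] p)
  have hm' : (m : ℝ) * b ≤ m₀ * b := by gcongr
  linarith [hper _ _ hp]

end BirkhoffSums

section SupBackwardSum

variable {α : Type*} {T : α → α} {g : α → ℝ} {M : ℝ}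

def backwardSums (T : α → α) (g : α → ℝ) (x : α) : Set ℝ :=
  {t | ∃ n y, T^[n] y = x ∧ birkhoffSum T g n y = t}

noncomputable def supBackwardSum (T : α → α) (g : α → ℝ) (x : α) : ℝ :=
  sSup (backwardSums T g x)

theorem zero_mem_backwardSums (x : α) : 0 ∈ backwardSums T g x :=
  ⟨0, x, rfl, birkhoffSum_zero T g x⟩

theorem add_mem_backwardSums_apply {x : α} {t : ℝ} (ht : t ∈ backwardSums T g x) :
    t + g x ∈ backwardSums T g (T x) := by
  obtain ⟨n, y, rfl, rfl⟩ := ht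
  exact ⟨n + 1, y, iterate_succ_apply' T n y, birkhoffSum_succ T g n y⟩

theorem bddAbove_backwardSums (hM : ∀ n y, birkhoffSum T g n y ≤ M) (x : α) :
    BddAbove (backwardSums T g x) := by
  refine ⟨M, ?_⟩
  rintro _ ⟨n, y, -, rfl⟩
  exact hM n y

theorem supBackwardSum_nonneg (hM : ∀ n y, birkhoffSum T g n y ≤ M) (x : α) :
    0 ≤ supBackwardSum T g x :=
  le_csSup (bddAbove_backwardSums hM x) (zero_mem_backwardSums x)

theorem supBackwardSum_le (hM : ∀ n y, birkhoffSum T g n y ≤ M) (x : α) :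
    supBackwardSum T g x ≤ M := by
  refine csSup_le ⟨0, zero_mem_backwardSums x⟩ ?_
  rintro _ ⟨n, y, -, rfl⟩
  exact hM n y

theorem abs_supBackwardSum_le (hM : ∀ n y, birkhoffSum T g n y ≤ M) (x : α) :
    |supBackwardSum T g x| ≤ M :=
  abs_le.mpr ⟨by linarith [supBackwardSum_nonneg hM x, supBackwardSum_le hM x],
    supBackwardSum_le hM x⟩

theorem add_supBackwardSum_le (hM : ∀ n y, birkhoffSum T g n y ≤ M) (x : α) :
    g x + supBackwardSum T g x ≤ supBackwardSum T g (T x) := by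
  rw [add_comm, ← le_sub_iff_add_le]
  refine csSup_le ⟨0, zero_mem_backwardSums x⟩ fun t ht => le_sub_iff_add_le.mpr ?_
  exact le_csSup (bddAbove_backwardSums hM (T x)) (add_mem_backwardSums_apply ht)

variable [PseudoMetricSpace α] {ζ κ ξ K θ : ℝ}

theorem supBackwardSum_le_add_of_dist_lt (hexp : LocallyExpanding T ζ κ)
    (hpre : LiftsPreimages T ξ ζ) (hκ : 1 < κ) (hθ : 0 < θ) (hK : 0 ≤ K)
    (hg : ∀ x y, |g x - g y| ≤ K * dist x y ^ θ) (hM : ∀ n y, birkhoffSum T g n y ≤ M)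
    {x y : α} (hxy : dist x y < ξ) :
    supBackwardSum T g x ≤ supBackwardSum T g y + K * (1 - κ⁻¹ ^ θ)⁻¹ * dist x y ^ θ := by
  refine csSup_le ⟨0, zero_mem_backwardSums x⟩ ?_
  rintro _ ⟨n, z, rfl, rfl⟩
  obtain ⟨z', hz', hz'z⟩ := exists_backward_shadowing hexp hpre hκ.le hxy n le_rfl
  have hshadow := birkhoffSum_le_add_of_shadowing hκ hθ hK hg dist_nonneg
    fun i hi => hz'z i hi.le
  have hz'y : birkhoffSum T g n z' ≤ supBackwardSum T g y :=
    le_csSup (bddAbove_backwardSums hM y) ⟨n, z', hz', rfl⟩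
  linarith

theorem abs_supBackwardSum_sub_le (hexp : LocallyExpanding T ζ κ)
    (hpre : LiftsPreimages T ξ ζ) (hκ : 1 < κ) (hθ : 0 < θ) (hK : 0 ≤ K)
    (hg : ∀ x y, |g x - g y| ≤ K * dist x y ^ θ) (hM : ∀ n y, birkhoffSum T g n y ≤ M)
    {x y : α} (hxy : dist x y < ξ) :
    |supBackwardSum T g x - supBackwardSum T g y| ≤
      K * (1 - κ⁻¹ ^ θ)⁻¹ * dist x y ^ θ := by
  have h₁ := supBackwardSum_le_add_of_dist_lt hexp hpre hκ hθ hK hg hM hxy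
  have h₂ := supBackwardSum_le_add_of_dist_lt hexp hpre hκ hθ hK hg hM
    (x := y) (y := x) (by rwa [dist_comm])
  rw [dist_comm] at h₂
  exact abs_sub_le_iff.mpr ⟨by linarith, by linarith⟩

end SupBackwardSum

section InvariantMeasures

variable {α : Type*} [MeasurableSpace α]

theorem Function.IsPeriodicPt.exists_mem_MT [MeasurableSingletonClass α] {T : α → α}
    (hT : Measurable T) {N : ℕ} (hN : 0 < N) {p : α} (hp : IsPeriodicPt T N p) :
    ∃ μ ∈ MT T, ∀ B : α → ℝ, intA B μ = (N : ℝ)⁻¹ * birkhoffSum T B N p := by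
  set ν : Measure α := birkhoffSum T Measure.dirac N p
  have hν : ν univ = N := by simp [ν, birkhoffSum, Measure.finsetSum_apply]
  have : IsProbabilityMeasure ((N : ℝ≥0∞)⁻¹ • ν) := ⟨by
    rw [Measure.smul_apply, hν, smul_eq_mul, ENNReal.inv_mul_cancel (by exact_mod_cast hN.ne')
      (ENNReal.natCast_ne_top N)]⟩
  refine ⟨⟨_, this⟩, ?_, fun B => ?_⟩
  · have hmap : ν.map T = ν := by
      rw [← Measure.mapₗ_apply_of_measurable hT, map_birkhoffSum]
      simp only [comp_def, Measure.mapₗ_apply_of_measurable hT, Measure.map_dirac' hT]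
      exact (birkhoffSum_comp_apply T Measure.dirac N p).trans (hp.birkhoffSum_apply_eq _)
    change ((N : ℝ≥0∞)⁻¹ • ν).map T = (N : ℝ≥0∞)⁻¹ • ν
    rw [Measure.map_smul, hmap]
  · change ∫ x, B x ∂((N : ℝ≥0∞)⁻¹ • ν) = _
    simp only [ν, birkhoffSum]
    rw [integral_smul_measure, integral_finsetSum_measure fun i _ => integrable_dirac (by simp)]
    simp [integral_dirac]

end InvariantMeasures

section Regularity

variable {α : Type*} [PseudoMetricSpace α] {θ : ℝ}

theorem equicontinuous_of_abs_sub_le_mul_rpow {ι : Type*} {f : ι → α → ℝ} {C r : ℝ}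
    (hr : 0 < r) (hθ : 0 < θ)
    (h : ∀ i x y, dist x y < r → |f i x - f i y| ≤ C * dist x y ^ θ) : Equicontinuous f := by
  intro x₀
  rw [Metric.equicontinuousAt_iff]
  intro ε hε
  have hlim : Tendsto (fun t : ℝ => C * t ^ θ) (𝓝 0) (𝓝 0) := by
    simpa [Real.zero_rpow hθ.ne'] using
      ((Real.continuousAt_rpow_const 0 θ (Or.inr hθ.le)).tendsto.const_mul C)
  obtain ⟨δ, hδ, hδε⟩ := Metric.tendsto_nhds_nhds.mp hlim ε hε
  refine ⟨min δ r, lt_min hδ hr, fun y hy i => ?_⟩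
  have hyδ : dist (dist x₀ y) 0 < δ := by
    rw [Real.dist_0_eq_abs, abs_of_nonneg dist_nonneg, dist_comm]
    exact hy.trans_le (min_le_left _ _)
  have hCε := hδε hyδ
  rw [Real.dist_0_eq_abs] at hCε
  rw [Real.dist_eq]
  exact (h i x₀ y (by rw [dist_comm]; exact hy.trans_le (min_le_right _ _))).trans_lt
    ((le_abs_self _).trans_lt hCε)

theorem continuous_of_abs_sub_le_mul_rpow {f : α → ℝ} {C : ℝ} (hθ : 0 < θ)
    (h : ∀ x y, |f x - f y| ≤ C * dist x y ^ θ) : Continuous f :=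
  (equicontinuous_of_abs_sub_le_mul_rpow (f := fun _ : Unit => f) one_pos hθ
    fun _ x y _ => h x y).continuous ()

theorem exists_uniform_holder_const {ι : Type*} {A : α → ℝ} {B : ι → α → ℝ} {KA : ℝ}
    {C : ι → ℝ} (hA : ∀ x y, |A x - A y| ≤ KA * dist x y ^ θ)
    (hdiff : ∀ j x y, |(B j x - A x) - (B j y - A y)| ≤ C j * dist x y ^ θ)
    (hC : BddAbove (range C)) :
    ∃ K, 0 ≤ K ∧ ∀ j x y, |B j x - B j y| ≤ K * dist x y ^ θ := by
  obtain ⟨Cb, hCb⟩ := hC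
  refine ⟨max (KA + Cb) 0, le_max_right _ _, fun j x y => ?_⟩
  calc |B j x - B j y| = |((B j x - A x) - (B j y - A y)) + (A x - A y)| := by ring_nf
    _ ≤ C j * dist x y ^ θ + KA * dist x y ^ θ := (abs_add_le _ _).trans
        (add_le_add (hdiff j x y) (hA x y))
    _ ≤ max (KA + Cb) 0 * dist x y ^ θ := by
        rw [← add_mul, add_comm]
        gcongr
        exact (by linarith [hCb ⟨j, rfl⟩] : KA + C j ≤ KA + Cb).trans (le_max_left _ _)

theorem exists_forall_abs_le_of_bddAbove_iSup {ι : Type*} [CompactSpace α] {A : α → ℝ}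
    {B : ι → α → ℝ} (hA : Continuous A) (hB : ∀ j, Continuous (B j))
    (hs : BddAbove (range fun j => ⨆ x, |B j x - A x|)) : ∃ b, ∀ j x, |B j x| ≤ b := by
  obtain ⟨bA, hbA⟩ := (isCompact_range hA.abs).bddAbove
  obtain ⟨bs, hbs⟩ := hs
  refine ⟨bA + bs, fun j x => ?_⟩
  calc |B j x| ≤ |A x| + |B j x - A x| := by simpa using abs_add_le (A x) (B j x - A x)
    _ ≤ bA + bs := add_le_add (hbA ⟨x, rfl⟩)
        ((le_ciSup (isCompact_range ((hB j).sub hA).abs).bddAbove x).trans (hbs ⟨j, rfl⟩))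

end Regularity

section Potentials

variable {T : X → X} {A B : X → ℝ}

theorem intA_le_of_forall_le (hB : Continuous B) {c : ℝ} (h : ∀ x, B x ≤ c)
    (μ : ProbabilityMeasure X) : intA B μ ≤ c :=
  calc intA B μ ≤ ∫ _, c ∂(μ : Measure X) :=
        integral_mono (hB.integrable_of_hasCompactSupport (.of_compactSpace B))
          (integrable_const c) h
    _ = c := by simp

theorem intA_le_betaConst (hB : Continuous B) {μ : ProbabilityMeasure X} (hμ : μ ∈ MT T) :
    intA B μ ≤ betaConst T B := by
  obtain ⟨c, hc⟩ := (isCompact_range hB).bddAbove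
  refine le_csSup ⟨c, ?_⟩ ⟨μ, hμ, rfl⟩
  rintro _ ⟨ν, -, rfl⟩
  exact intA_le_of_forall_le hB (fun x => hc ⟨x, rfl⟩) ν

theorem betaConst_le_of_forall_le (hB : Continuous B) {c : ℝ} (hc : 0 ≤ c)
    (h : ∀ x, B x ≤ c) : betaConst T B ≤ c :=
  Real.sSup_le (by rintro _ ⟨μ, -, rfl⟩; exact intA_le_of_forall_le hB h μ) hc

theorem betaConst_le_add (hne : (MT T).Nonempty) (hA : Continuous A) (hB : Continuous B)
    {s : ℝ} (h : ∀ x, B x ≤ A x + s) : betaConst T B ≤ betaConst T A + s := by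
  refine csSup_le (hne.image _) ?_
  rintro _ ⟨μ, hμ, rfl⟩
  have hint : ∀ f : X → ℝ, Continuous f → Integrable f (μ : Measure X) :=
    fun f hf => hf.integrable_of_hasCompactSupport (.of_compactSpace f)
  have hBA : intA B μ ≤ intA A μ + s :=
    calc intA B μ ≤ ∫ x, (A x + s) ∂(μ : Measure X) :=
          integral_mono (hint B hB) (hint _ (hA.add continuous_const)) h
      _ = intA A μ + s := by
          rw [integral_add (hint A hA) (integrable_const s)]
          simp [intA]
  linarith [intA_le_betaConst hA hμ]

theorem Function.IsPeriodicPt.birkhoffSum_le_betaConst (hT : Continuous T) (hB : Continuous B)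
    {N : ℕ} {p : X} (hp : IsPeriodicPt T N p) : birkhoffSum T B N p ≤ N * betaConst T B := by
  rcases Nat.eq_zero_or_pos N with rfl | hN
  · simp
  obtain ⟨μ, hμ, hμB⟩ := hp.exists_mem_MT hT.measurable hN
  have := intA_le_betaConst hB hμ
  rwa [hμB, inv_mul_le_iff₀ (by positivity)] at this

variable {κ η₀ θ K : ℝ} {m₀ : ℕ}

theorem PeriodicShadowing.MT_nonempty [Nonempty X] (hT : Continuous T)
    (hsh : PeriodicShadowing T κ η₀ m₀) : (MT T).Nonempty := by
  obtain ⟨m, -, p, hp, -⟩ := hsh 1 le_rfl (Classical.arbitrary X)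
  obtain ⟨μ, hμ, -⟩ := hp.exists_mem_MT hT.measurable (by omega)
  exact ⟨μ, hμ⟩

theorem PeriodicShadowing.birkhoffSum_sub_betaConst_le (hsh : PeriodicShadowing T κ η₀ m₀)
    (hT : Continuous T) (hκ : 1 < κ) (hθ : 0 < θ) (hη₀ : 0 ≤ η₀) (hK : 0 ≤ K)
    (hB : ∀ x y, |B x - B y| ≤ K * dist x y ^ θ) {b : ℝ} (hb : ∀ x, |B x| ≤ b)
    (n : ℕ) (y : X) :
    birkhoffSum T (fun x => B x - betaConst T B) n y ≤
      K * (1 - κ⁻¹ ^ θ)⁻¹ * η₀ ^ θ + m₀ * (2 * b) := by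
  have hBc := continuous_of_abs_sub_le_mul_rpow hθ hB
  have hb₀ : 0 ≤ b := (abs_nonneg _).trans (hb y)
  have hβ : betaConst T B ≤ b := betaConst_le_of_forall_le hBc hb₀ fun x => (abs_le.mp (hb x)).2
  refine hsh.birkhoffSum_le hκ hθ hK (fun x y => ?_) hη₀ (fun N p hp => ?_) (by positivity)
    (fun x => ?_) n y
  · simpa only [sub_sub_sub_cancel_right] using hB x y
  · have := hp.birkhoffSum_le_betaConst hT hBc
    simp only [birkhoffSum, Finset.sum_sub_distrib, Finset.sum_const, Finset.card_range,
      nsmul_eq_mul] at this ⊢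
    linarith
  · linarith [(abs_le.mp (hb x)).1]

end Potentials

section SubActions

variable {α : Type*} [MeasurableSpace α] {T : α → α}

theorem isSubAction_supBackwardSum {B : α → ℝ} {M : ℝ}
    (hM : ∀ n y, birkhoffSum T (fun x => B x - betaConst T B) n y ≤ M) :
    IsSubAction T B (supBackwardSum T fun x => B x - betaConst T B) := fun x => by
  linarith [add_supBackwardSum_le hM x]

theorem isSubAction_of_tendsto {ι : Type*} {l : Filter ι} [l.NeBot] {B v : ι → α → ℝ}
    {A u : α → ℝ} {s : ι → ℝ} (hv : ∀ i, IsSubAction T (B i) (v i))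
    (hAB : ∀ i x, A x ≤ B i x + s i) (hβ : ∀ i, betaConst T (B i) ≤ betaConst T A + s i)
    (hs : Tendsto s l (𝓝 0)) (hu : ∀ x, Tendsto (fun i => v i x) l (𝓝 (u x))) :
    IsSubAction T A u := by
  intro x
  have hlim : Tendsto (fun i => A x + v i x - v i (T x) - 2 * s i) l
      (𝓝 (A x + u x - u (T x) - 2 * 0)) :=
    ((tendsto_const_nhds.add (hu x)).sub (hu (T x))).sub (hs.const_mul 2)
  have := le_of_tendsto' hlim fun i =>
    (by linarith [hv i x, hAB i x, hβ i] : _ ≤ betaConst T A)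
  linarith

end SubActions

theorem stmt18_general (T : X → X) (hTc : Continuous T) (htrans : TopTransitive T)
    (ζ κ : ℝ) (hζ : 0 < ζ) (hκ : 1 < κ)
    (hexp : ∀ x y : X, dist x y < ζ → κ * dist x y ≤ dist (T x) (T y))
    (ξ : ℝ) (hξ : 0 < ξ)
    (hpre : ∀ x' y' x : X, dist x' y' < ξ → T x = x' → ∃ y, T y = y' ∧ dist x y < ζ)
    (θ : ℝ) (hθ0 : 0 < θ)
    (A : X → ℝ) (KA : ℝ) (hAH : ∀ x y : X, |A x - A y| ≤ KA * dist x y ^ θ)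
    (B : ℕ → X → ℝ)
    (C : ℕ → ℝ) (hC : Tendsto C atTop (𝓝 0))
    (hdiffH : ∀ j, ∀ x y : X, |(B j x - A x) - (B j y - A y)| ≤ C j * dist x y ^ θ)
    (hsup : Tendsto (fun j => ⨆ x : X, |B j x - A x|) atTop (𝓝 0)) :
    ∃ v : ℕ → X → ℝ,
      (∀ j, Continuous (v j) ∧ IsSubAction T (B j) (v j)) ∧
      Equicontinuous v ∧
      (∃ M : ℝ, ∀ j, ∀ x : X, |v j x| ≤ M) ∧
      ∀ u : X → ℝ, Continuous u →
        (∃ ψ : ℕ → ℕ, StrictMono ψ ∧ TendstoUniformly (fun k => v (ψ k)) u atTop) →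
        IsSubAction T A u := by
  obtain ⟨η₀, hη₀, m₀, hsh⟩ := exists_periodicShadowing hζ hκ hξ htrans hexp hpre
  obtain ⟨K, hK, hBH⟩ := exists_uniform_holder_const hAH hdiffH hC.bddAbove_range
  have hAc := continuous_of_abs_sub_le_mul_rpow hθ0 hAH
  have hBc j : Continuous (B j) := continuous_of_abs_sub_le_mul_rpow hθ0 (hBH j)
  have hBA j x : |B j x - A x| ≤ ⨆ x, |B j x - A x| :=
    le_ciSup (isCompact_range ((hBc j).sub hAc).abs).bddAbove x
  obtain ⟨b, hb⟩ := exists_forall_abs_le_of_bddAbove_iSup hAc hBc hsup.bddAbove_range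
  set g := fun j x => B j x - betaConst T (B j)
  have hsum j := hsh.birkhoffSum_sub_betaConst_le hTc hκ hθ0 hη₀.le hK (hBH j) (hb j)
  have hg j x y : |g j x - g j y| ≤ K * dist x y ^ θ := by
    simpa only [g, sub_sub_sub_cancel_right] using hBH j x y
  have hequi : Equicontinuous fun j => supBackwardSum T (g j) :=
    equicontinuous_of_abs_sub_le_mul_rpow hξ hθ0 fun j x y hxy =>
      abs_supBackwardSum_sub_le hexp hpre hκ hθ0 hK (hg j) (hsum j) hxy
  refine ⟨fun j => supBackwardSum T (g j),
    fun j => ⟨hequi.continuous j, isSubAction_supBackwardSum (hsum j)⟩, hequi,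
    ⟨_, fun j => abs_supBackwardSum_le (hsum j)⟩, ?_⟩
  rintro u - ⟨ψ, hψ, hu⟩ x
  have : Nonempty X := ⟨x⟩
  refine isSubAction_of_tendsto (fun k => isSubAction_supBackwardSum (hsum (ψ k)))
    (fun k x => ?_) (fun k => betaConst_le_add (hsh.MT_nonempty hTc) hAc (hBc _) fun x => ?_)
    (hsup.comp hψ.tendsto_atTop) hu.tendsto_at x
  · dsimp only [comp_apply]; linarith [(abs_le.mp (hBA (ψ k) x)).1]
  · dsimp only [comp_apply]; linarith [(abs_le.mp (hBA (ψ k) x)).2]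

/-- let `(X,T)` be a transitive, expansive dynamical system with a locally
constant number of pre-images, and let `B_j` be θ-Hölder functions converging in the
θ-Hölder norm to a potential `A` (i.e. `Höld_θ(B_j - A) → 0` and `‖B_j - A‖₀ → 0`).  Then
one can choose a sub-action `v_j` for each `B_j` so that the sequence `{v_j}` is
equicontinuous and uniformly bounded, and every uniform accumulation point of `{v_j}` is a
sub-action for `A`. -/
theorem stmt18 (T : X → X) (hTc : Continuous T) (htrans : TopTransitive T)
    (ζ κ : ℝ) (hζ : 0 < ζ) (hκ : 1 < κ)
    (hexp : ∀ x y : X, dist x y < ζ → κ * dist x y ≤ dist (T x) (T y))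
    (ξ : ℝ) (hξ : 0 < ξ)
    (hpre : ∀ x' y' x : X, dist x' y' < ξ → T x = x' → ∃ y, T y = y' ∧ dist x y < ζ)
    (θ : ℝ) (hθ0 : 0 < θ) (hθ1 : θ ≤ 1)
    (A : X → ℝ) (KA : ℝ) (hAH : ∀ x y : X, |A x - A y| ≤ KA * dist x y ^ θ)
    (B : ℕ → X → ℝ) (K : ℕ → ℝ)
    (hBH : ∀ j, ∀ x y : X, |B j x - B j y| ≤ K j * dist x y ^ θ)
    (C : ℕ → ℝ) (hC : Tendsto C atTop (𝓝 0))
    (hdiffH : ∀ j, ∀ x y : X, |(B j x - A x) - (B j y - A y)| ≤ C j * dist x y ^ θ)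
    (hsup : Tendsto (fun j => ⨆ x : X, |B j x - A x|) atTop (𝓝 0)) :
    ∃ v : ℕ → X → ℝ,
      (∀ j, Continuous (v j) ∧ IsSubAction T (B j) (v j)) ∧
      Equicontinuous v ∧
      (∃ M : ℝ, ∀ j, ∀ x : X, |v j x| ≤ M) ∧
      ∀ u : X → ℝ, Continuous u →
        (∃ ψ : ℕ → ℕ, StrictMono ψ ∧ TendstoUniformly (fun k => v (ψ k)) u atTop) →
        IsSubAction T A u :=
  stmt18_general T hTc htrans ζ κ hζ hκ hexp ξ hξ hpre θ hθ0 A KA hAH B C hC hdiffH hsup
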